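/- arXiv:2110.06964 — 5 statements merged into one kernel-verified Lean document; each statement's English description precedes it below -/
import Mathlib

section
/- For any n×n complex matrix C, the hafnian of the 2n×2n symmetric block matrix [[0, C],[C^T, 0]] equals the permanent of C. -/
/-! A pair of indices contributes a nonzero entry of `[[0, C], [Cᵀ, 0]]` only if it joins the two
blocks. A bijection with nonzero term therefore consists of a choice, for each of the `n` pairs, of
which slot lands in the first block, together with two permutations `f, g` recording where the two
slots land; its term is `∏ k, C (f k) (g k)` because the block matrix is symmetric. Summing over
the `2ⁿ` choices and over `f, g` gives `2ⁿ · n! · perm C`. -/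

open Matrix Equiv

/-- The permanent of a square matrix. -/
noncomputable def perm {n : ℕ} (C : Matrix (Fin n) (Fin n) ℂ) : ℂ :=
  ∑ σ : Equiv.Perm (Fin n), ∏ i, C i (σ i)

/-- The hafnian of a `2n × 2n` matrix. -/
noncomputable def hafnian {n : ℕ} (A : Matrix (Fin (n + n)) (Fin (n + n)) ℂ) : ℂ :=
  (1 / ((n.factorial : ℂ) * 2 ^ n)) *
    ∑ σ : Equiv.Perm (Fin (n + n)), ∏ i : Fin n,
      A (σ ⟨2 * i.1, by have := i.2; omega⟩) (σ ⟨2 * i.1 + 1, by have := i.2; omega⟩)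

section

variable {ι R : Type*} [CommSemiring R]

/-- The hafnian sum without normalization, with `(inl k, inr k)` as the reference pairs. -/
def hafnianSum [Fintype ι] [DecidableEq ι] (B : Matrix (ι ⊕ ι) (ι ⊕ ι) R) : R :=
  ∑ τ : Perm (ι ⊕ ι), ∏ k, B (τ (Sum.inl k)) (τ (Sum.inr k))

def sumFlip (ε : ι → Bool) : Perm (ι ⊕ ι) :=
  Function.Involutive.toPerm
    (Sum.elim (fun k => if ε k then .inr k else .inl k) (fun k => if ε k then .inl k else .inr k))
    (by rintro (k | k) <;> cases h : ε k <;> simp [h])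

@[simp]
lemma sumFlip_inl (ε : ι → Bool) (k : ι) :
    sumFlip ε (.inl k) = if ε k then .inr k else .inl k := rfl

@[simp]
lemma sumFlip_inr (ε : ι → Bool) (k : ι) :
    sumFlip ε (.inr k) = if ε k then .inl k else .inr k := rfl

lemma sumFlip_mul_self (ε : ι → Bool) : sumFlip ε * sumFlip ε = 1 := by
  ext (k | k) <;> cases h : ε k <;> simp [h]

lemma fromBlocks_zero_apply_of_isLeft_eq (C : Matrix ι ι R) {a b : ι ⊕ ι}
    (h : a.isLeft = b.isLeft) : fromBlocks 0 C Cᵀ 0 a b = 0 := by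
  rcases a with a | a <;> rcases b with b | b <;> simp_all

lemma prod_fromBlocks_sumCongr_mul_sumFlip [Fintype ι] (C : Matrix ι ι R) (f g : Perm ι)
    (ε : ι → Bool) :
    ∏ k, fromBlocks 0 C Cᵀ 0 ((sumCongr f g * sumFlip ε) (.inl k))
      ((sumCongr f g * sumFlip ε) (.inr k)) = ∏ k, C (f k) (g k) := by
  refine Finset.prod_congr rfl fun k _ => ?_
  cases h : ε k <;> simp [h]

lemma sumCongr_mul_sumFlip_injective :
    Function.Injective fun x : (ι → Bool) × (Perm ι × Perm ι) =>
      Perm.sumCongrHom ι ι x.2 * sumFlip x.1 := by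
  rintro ⟨ε, p⟩ ⟨ε', p'⟩ h
  have hε : ε = ε' := by
    funext k
    have := congr_arg Sum.isLeft (Equiv.congr_fun h (.inl k))
    cases hk : ε k <;> cases hk' : ε' k <;> simp [hk, hk'] at this ⊢
  subst hε
  simpa using Perm.sumCongrHom_injective (mul_right_cancel h)

lemma exists_sumCongr_mul_sumFlip_eq [Finite ι] (τ : Perm (ι ⊕ ι))
    (hτ : ∀ k, (τ (.inl k)).isLeft ≠ (τ (.inr k)).isLeft) :
    ∃ ε p, Perm.sumCongrHom ι ι p * sumFlip ε = τ := by
  set ε : ι → Bool := fun k => (τ (.inl k)).isRight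
  have hmaps : Set.MapsTo (τ * sumFlip ε) (Set.range .inl) (Set.range .inl) := by
    rintro _ ⟨k, rfl⟩
    have := hτ k
    rcases ha : τ (.inl k) with a | a <;> rcases hb : τ (.inr k) with b | b <;> simp_all [ε]
  obtain ⟨p, hp⟩ := Perm.mem_sumCongrHom_range_of_perm_mapsTo_inl hmaps
  exact ⟨ε, p, by rw [hp, mul_assoc, sumFlip_mul_self, mul_one]⟩

theorem hafnianSum_fromBlocks_zero [Fintype ι] [DecidableEq ι] (C : Matrix ι ι R) :
    hafnianSum (fromBlocks 0 C Cᵀ 0) =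
      2 ^ Fintype.card ι * ∑ p : Perm ι × Perm ι, ∏ k, C (p.1 k) (p.2 k) := by
  have hsupport : ∀ τ ∉ Set.range fun x : (ι → Bool) × (Perm ι × Perm ι) =>
      Perm.sumCongrHom ι ι x.2 * sumFlip x.1,
      ∏ k, fromBlocks 0 C Cᵀ 0 (τ (.inl k)) (τ (.inr k)) = 0 := by
    intro τ hτ
    by_contra hne
    refine hτ ?_
    obtain ⟨ε, p, h⟩ := exists_sumCongr_mul_sumFlip_eq τ fun k hk =>
      hne (Finset.prod_eq_zero (Finset.mem_univ k) (fromBlocks_zero_apply_of_isLeft_eq C hk))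
    exact ⟨(ε, p), h⟩
  rw [hafnianSum, ← Fintype.sum_of_injective _ sumCongr_mul_sumFlip_injective _ _ hsupport
    fun x => (prod_fromBlocks_sumCongr_mul_sumFlip C x.2.1 x.2.2 x.1).symm]
  simp only [Fintype.sum_prod_type, Finset.sum_const, Finset.card_univ, Fintype.card_fun,
    Fintype.card_bool, nsmul_eq_mul, Nat.cast_pow, Nat.cast_ofNat]

lemma sum_perm_prod_eq_permanent [Fintype ι] [DecidableEq ι] (M : Matrix ι ι R) :
    ∑ σ : Perm ι, ∏ i, M i (σ i) = M.permanent := by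
  rw [← permanent_transpose]
  rfl

theorem sum_perm_pair_prod_eq_factorial_mul_permanent [Fintype ι] [DecidableEq ι]
    (C : Matrix ι ι R) :
    ∑ p : Perm ι × Perm ι, ∏ k, C (p.1 k) (p.2 k) =
      (Fintype.card ι).factorial * C.permanent := by
  rw [Fintype.sum_prod_type]
  have hrow (f : Perm ι) : ∑ g : Perm ι, ∏ k, C (f k) (g k) = C.permanent :=
    (sum_perm_prod_eq_permanent (C.submatrix f id)).trans (permanent_permute_cols f C)
  rw [Finset.sum_congr rfl fun f _ => hrow f, Finset.sum_const, Finset.card_univ,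
    Fintype.card_perm, nsmul_eq_mul]

end

def finInterleave (n : ℕ) : Fin n ⊕ Fin n ≃ Fin (n + n) :=
  (boolProdEquivSum (Fin n)).symm.trans <| (prodComm _ _).trans <|
    (prodCongr (Equiv.refl _) finTwoEquiv.symm).trans <|
      finProdFinEquiv.trans <| finCongr (mul_two n)

@[simp]
lemma finInterleave_inl {n : ℕ} (i : Fin n) :
    finInterleave n (.inl i) = ⟨2 * i.1, by omega⟩ := by
  ext; simp [finInterleave, finTwoEquiv, mul_comm]

@[simp]
lemma finInterleave_inr {n : ℕ} (i : Fin n) :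
    finInterleave n (.inr i) = ⟨2 * i.1 + 1, by omega⟩ := by
  ext; simp [finInterleave, finTwoEquiv, mul_comm, add_comm]

theorem hafnian_reindex {n : ℕ} (e : Fin n ⊕ Fin n ≃ Fin (n + n))
    (B : Matrix (Fin n ⊕ Fin n) (Fin n ⊕ Fin n) ℂ) :
    hafnian (B.reindex e e) = 1 / ((n.factorial : ℂ) * 2 ^ n) * hafnianSum B := by
  rw [hafnian, hafnianSum]
  congr 1
  refine Fintype.sum_equiv ((finInterleave n).symm.equivCongr e.symm) _ _ fun σ => ?_
  simp [← finInterleave_inl, ← finInterleave_inr]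

theorem hafnian_block_eq_perm {n : ℕ} (C : Matrix (Fin n) (Fin n) ℂ) :
    hafnian ((Matrix.fromBlocks 0 C Cᵀ 0).reindex finSumFinEquiv finSumFinEquiv) = perm C := by
  rw [hafnian_reindex, hafnianSum_fromBlocks_zero, sum_perm_pair_prod_eq_factorial_mul_permanent,
    Fintype.card_fin, perm, sum_perm_prod_eq_permanent]
  field_simp [n.factorial_ne_zero]
end

section
/- Let A be a c×c random matrix whose entries are i.i.d. standard complex Gaussians (mean 0, E[|a|^2]=1). Let S, T ∈ ℕ^c be repetition vectors with n = ∑ s_i = ∑ t_j, and let A_{S,T} be the n×n matrix obtained by repeating row i of A exactly s_i times and column j exactly t_j times. Then E[|Per(A_{S,T})|^2] = n! ∏_i s_i! ∏_j t_j!. -/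
open MeasureTheory ProbabilityTheory

/-- A random `c × c` matrix whose entries are i.i.d. standard complex Gaussians, built from
two independent real Gaussians of variance `1/2` (real and imaginary part) per entry. -/
noncomputable def gaussianMatrix (c : ℕ) (ω : (Fin c × Fin c) × Bool → ℝ) :
    Matrix (Fin c) (Fin c) ℂ :=
  fun i j => Complex.mk (ω ((i, j), true)) (ω ((i, j), false))

/-- The permanent of the matrix obtained from `A` by repeating row `i` exactly `S i` times and
column `j` exactly `T j` times, realizing the row and column blocks as sigma types. -/
noncomputable def permRep {c : ℕ} (A : Matrix (Fin c) (Fin c) ℂ) (S T : Fin c → ℕ) : ℂ :=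
  ∑ σ : (Σ i : Fin c, Fin (S i)) ≃ (Σ j : Fin c, Fin (T j)),
    ∏ k : (Σ i : Fin c, Fin (S i)), A k.1 (σ k).1


/-!
Expanding `|Per A_{S,T}|²` over pairs `σ, τ` of bijections from the repeated rows to the repeated
columns, the term of `(σ, τ)` is `∏ a^{m_σ(a)} conj(a)^{m_τ(a)}` over the entries `a` of `A`, where
`m_σ(a)` is the number of positions of the block of `a` used by `σ`. The entries are independent,
and a standard complex Gaussian has `E[a^m conj(a)^m'] = 0` for `m ≠ m'` by rotation invariance and
`E|a|^{2m} = m!` by a Gamma integral, so the expectation is `∑_{σ,τ} ∏_a [m_σ(a) = m_τ(a)] m_σ(a)!`.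

That product counts the permutations `α` of the repeated rows that preserve rows and carry the
column blocks of `τ` to those of `σ`. Such an `α` is the same as a row-preserving `α`
(`∏ s_i!` choices) together with the bijection `τ ∘ α`, which has the column blocks of `σ`
(`∏ t_j!` choices). Summing over `τ`, and then over the `n!` bijections `σ`, gives the result.
-/

section EquivOver

variable {X Y C : Type*}

def equivOverEquivPi (u : X → C) (v : Y → C) :
    {e : X ≃ Y // ∀ x, v (e x) = u x} ≃ ∀ c, {x // u x = c} ≃ {y // v y = c} where
  toFun e c := e.1.subtypeEquiv fun x => by rw [e.2 x]
  invFun F := ⟨Equiv.ofFiberEquiv F, Equiv.ofFiberEquiv_map F⟩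
  left_inv _ := rfl
  right_inv F := by
    funext c
    ext ⟨x, rfl⟩
    rfl

lemma Nat.card_equiv_eq_ite (X Y : Type*) [Finite X] [Finite Y] :
    Nat.card (X ≃ Y) = if Nat.card X = Nat.card Y then (Nat.card X).factorial else 0 := by
  have := Fintype.ofFinite X
  have := Fintype.ofFinite Y
  classical
  simp only [Nat.card_eq_fintype_card]
  split_ifs with h
  · exact Fintype.card_equiv (Fintype.equivOfCardEq h)
  · exact Fintype.card_eq_zero_iff.mpr ⟨fun e => h (Fintype.card_congr e)⟩

lemma card_equivOver [Finite X] [Finite Y] [Fintype C] (u : X → C) (v : Y → C) :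
    Nat.card {e : X ≃ Y // ∀ x, v (e x) = u x} =
      ∏ c, if Nat.card {x // u x = c} = Nat.card {y // v y = c}
        then (Nat.card {x // u x = c}).factorial else 0 := by
  rw [Nat.card_congr (equivOverEquivPi u v), Nat.card_pi]
  exact Finset.prod_congr rfl fun c _ => Nat.card_equiv_eq_ite _ _

end EquivOver

lemma Fintype.prod_comp_eq_prod_pow_card {X R M : Type*} [Fintype X] [Fintype R] [CommMonoid M]
    (f : X → R) (w : R → M) : ∏ x, w (f x) = ∏ p, w p ^ Nat.card {x // f x = p} := by
  classical
  rw [← Finset.prod_fiberwise Finset.univ f]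
  refine Finset.prod_congr rfl fun p _ => ?_
  rw [Finset.prod_congr rfl fun x hx => by rw [(Finset.mem_filter.1 hx).2], Finset.prod_const,
    Nat.card_eq_fintype_card, Fintype.card_subtype]

section BlockCount

variable {X Y R C : Type*} (r : X → R) (q : Y → C)

/-- `r` and `q` send a repeated row (column) to the row (column) of `A` it copies, so that
`blockCount r q σ (i, j)` is the exponent of `A i j` in the term of `σ` in the permanent. -/
noncomputable def blockCount (σ : X ≃ Y) (p : R × C) : ℕ :=
  Nat.card {x // (r x, q (σ x)) = p}

lemma prod_eq_prod_pow_blockCount [Fintype X] [Fintype R] [Fintype C] {M : Type*} [CommMonoid M]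
    (σ : X ≃ Y) (w : R → C → M) :
    ∏ x, w (r x) (q (σ x)) = ∏ p, w p.1 p.2 ^ blockCount r q σ p :=
  Fintype.prod_comp_eq_prod_pow_card (fun x => (r x, q (σ x))) fun p => w p.1 p.2

def sigmaEquivOverEquivProd (σ : X ≃ Y) :
    (Σ τ : X ≃ Y, {α : X ≃ X // ∀ x, (r (α x), q (τ (α x))) = (r x, q (σ x))}) ≃
      {α : X ≃ X // ∀ x, r (α x) = r x} × {τ : X ≃ Y // ∀ x, q (τ x) = q (σ x)} where
  toFun a := (⟨a.2.1, fun x => congrArg Prod.fst (a.2.2 x)⟩,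
    ⟨a.2.1.trans a.1, fun x => congrArg Prod.snd (a.2.2 x)⟩)
  invFun b := ⟨b.1.1.symm.trans b.2.1, b.1.1, fun x => Prod.ext (b.1.2 x) (by simpa using b.2.2 x)⟩
  left_inv a := by
    obtain ⟨τ, α, h⟩ := a
    ext <;> simp
  right_inv b := by
    obtain ⟨⟨α, hα⟩, ⟨τ, hτ⟩⟩ := b
    ext <;> simp

theorem sum_sum_prod_blockCount [Fintype X] [DecidableEq X] [Fintype Y] [DecidableEq Y]
    [Fintype R] [Fintype C] :
    ∑ σ : X ≃ Y, ∑ τ : X ≃ Y, ∏ p,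
        (if blockCount r q σ p = blockCount r q τ p then (blockCount r q σ p).factorial else 0) =
      Nat.card (X ≃ Y) * (∏ i, (Nat.card {x // r x = i}).factorial) *
        ∏ j, (Nat.card {y // q y = j}).factorial := by
  have hrow : Nat.card {α : X ≃ X // ∀ x, r (α x) = r x} =
      ∏ i, (Nat.card {x // r x = i}).factorial := by
    rw [card_equivOver]
    exact Finset.prod_congr rfl fun i _ => if_pos rfl
  have hcol (σ : X ≃ Y) : Nat.card {τ : X ≃ Y // ∀ x, q (τ x) = q (σ x)} =
      ∏ j, (Nat.card {y // q y = j}).factorial := by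
    rw [card_equivOver]
    refine Finset.prod_congr rfl fun j _ => ?_
    have hfiber : Nat.card {x // q (σ x) = j} = Nat.card {y // q y = j} :=
      Nat.card_congr (σ.subtypeEquiv fun _ => Iff.rfl)
    rw [hfiber, if_pos rfl]
  calc ∑ σ : X ≃ Y, ∑ τ : X ≃ Y, ∏ p,
        (if blockCount r q σ p = blockCount r q τ p then (blockCount r q σ p).factorial else 0)
      = ∑ σ : X ≃ Y, ∑ τ : X ≃ Y,
          Nat.card {α : X ≃ X // ∀ x, (r (α x), q (τ (α x))) = (r x, q (σ x))} :=
        Finset.sum_congr rfl fun σ _ => Finset.sum_congr rfl fun τ _ => (card_equivOver _ _).symm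
    _ = ∑ σ : X ≃ Y, Nat.card {α : X ≃ X // ∀ x, r (α x) = r x} *
          Nat.card {τ : X ≃ Y // ∀ x, q (τ x) = q (σ x)} := by
        refine Finset.sum_congr rfl fun σ _ => ?_
        rw [← Nat.card_sigma, ← Nat.card_prod, Nat.card_congr (sigmaEquivOverEquivProd r q σ)]
    _ = _ := by
        simp only [hrow, hcol, Finset.sum_const, Finset.card_univ, smul_eq_mul,
          Nat.card_eq_fintype_card]
        ring

end BlockCount

open Real ComplexConjugate

noncomputable def stdComplexGaussian : Measure ℂ :=
  ((gaussianReal 0 (1 / 2)).prod (gaussianReal 0 (1 / 2))).map Complex.equivRealProdCLM.symm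

instance : IsGaussian stdComplexGaussian := by
  unfold stdComplexGaussian
  infer_instance

lemma gaussianPDFReal_half_mul (x y : ℝ) :
    gaussianPDFReal 0 (1 / 2) x * gaussianPDFReal 0 (1 / 2) y =
      π⁻¹ * rexp (-‖(⟨x, y⟩ : ℂ)‖ ^ 2) := by
  rw [Complex.sq_norm, Complex.normSq_mk, gaussianPDFReal, gaussianPDFReal]
  have hπ : √π * √π = π := Real.mul_self_sqrt pi_pos.le
  have hvar : (2 * π * ((1 / 2 : NNReal) : ℝ)) = π := by push_cast; ring
  rw [hvar, mul_mul_mul_comm, ← mul_inv, hπ, ← Real.exp_add]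
  congr 2
  push_cast
  ring

lemma integral_stdComplexGaussian_eq_integral_smul {E : Type*} [NormedAddCommGroup E]
    [NormedSpace ℝ E] (g : ℂ → E) :
    ∫ z, g z ∂stdComplexGaussian = ∫ z, (π⁻¹ * rexp (-‖z‖ ^ 2)) • g z := by
  have hv : (1 / 2 : NNReal) ≠ 0 := by norm_num
  have hpdf := measurable_gaussianPDF (0 : ℝ) (1 / 2)
  have hemb : MeasurableEmbedding Complex.equivRealProdCLM.symm :=
    Complex.equivRealProdCLM.symm.toHomeomorph.measurableEmbedding
  rw [stdComplexGaussian, hemb.integral_map,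
    gaussianReal_of_var_ne_zero 0 hv, prod_withDensity hpdf hpdf, ← Measure.volume_eq_prod,
    integral_withDensity_eq_integral_toReal_smul (by fun_prop)
      (ae_of_all _ fun _ => ENNReal.mul_lt_top gaussianPDF_lt_top gaussianPDF_lt_top),
    ← Complex.volume_preserving_equiv_real_prod.integral_comp']
  refine integral_congr_ae (ae_of_all _ fun z => ?_)
  dsimp only
  rw [ENNReal.toReal_mul, toReal_gaussianPDF, toReal_gaussianPDF, gaussianPDFReal_half_mul]
  rfl

lemma integral_stdComplexGaussian_comp_mul {E : Type*} [NormedAddCommGroup E] [NormedSpace ℝ E]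
    (u : Circle) (g : ℂ → E) :
    ∫ z, g (u * z) ∂stdComplexGaussian = ∫ z, g z ∂stdComplexGaussian := by
  have h := (rotation u).measurePreserving.integral_comp
    (rotation u).toHomeomorph.measurableEmbedding fun w => (π⁻¹ * rexp (-‖w‖ ^ 2)) • g w
  rw [integral_stdComplexGaussian_eq_integral_smul, integral_stdComplexGaussian_eq_integral_smul,
    ← h]
  simp [rotation_apply, Circle.norm_coe]

lemma integrable_pow_mul_conj_pow_stdComplexGaussian (a b : ℕ) :
    Integrable (fun z : ℂ => z ^ a * conj z ^ b) stdComplexGaussian := by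
  have hmom := IsGaussian.memLp_id stdComplexGaussian ((a + b : ℕ) : ENNReal)
    (ENNReal.natCast_ne_top _)
  refine hmom.integrable_norm_pow'.mono' (by fun_prop) (ae_of_all _ fun z => ?_)
  simp [pow_add]

lemma Complex.integral_norm_pow_mul_exp_neg_sq (k : ℕ) :
    ∫ z : ℂ, ‖z‖ ^ (2 * k) * rexp (-‖z‖ ^ 2) = π * k.factorial := by
  have h := Complex.integral_rpow_mul_exp_neg_rpow (p := 2) (q := 2 * k) one_le_two
    ((neg_lt_zero.2 two_pos).trans_le (by positivity))
  have hk : ((2 * k : ℝ) + 2) / 2 = k + 1 := by ring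
  have hpow (x : ℂ) : ‖x‖ ^ (2 * k : ℝ) = ‖x‖ ^ (2 * k) := by
    rw [← Real.rpow_natCast]
    push_cast
    rfl
  simp only [hk, Real.Gamma_nat_eq_factorial, hpow, Real.rpow_two] at h
  rw [h]
  ring

lemma integral_pow_mul_conj_pow_stdComplexGaussian_of_ne {a b : ℕ} (hab : a ≠ b) :
    ∫ z, z ^ a * conj z ^ b ∂stdComplexGaussian = 0 := by
  -- rotating by `u` multiplies the integrand by `u ^ a * conj u ^ b = -1`
  set u := Circle.exp (π / ((a : ℝ) - b))
  have hab' : (a : ℝ) - b ≠ 0 := sub_ne_zero.2 (Nat.cast_injective.ne hab)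
  have hu : (u : ℂ) ^ a * conj (u : ℂ) ^ b = -1 := by
    rw [Circle.coe_exp, ← Complex.exp_conj, ← Complex.exp_nat_mul, ← Complex.exp_nat_mul,
      ← Complex.exp_add, ← Complex.exp_pi_mul_I, map_mul, Complex.conj_ofReal, Complex.conj_I]
    congr 1
    have hπ : (π : ℂ) = ((a : ℝ) - b : ℝ) * (π / ((a : ℝ) - b) : ℝ) := by
      rw [← Complex.ofReal_mul, mul_div_cancel₀ _ hab']
    rw [hπ]
    push_cast
    ring
  have h := integral_stdComplexGaussian_comp_mul u fun z => z ^ a * conj z ^ b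
  simp only [map_mul, mul_pow, mul_mul_mul_comm _ (_ ^ a), hu, neg_one_mul, integral_neg] at h
  exact self_eq_neg.1 h.symm

lemma integral_pow_mul_conj_pow_stdComplexGaussian (a b : ℕ) :
    ∫ z, z ^ a * conj z ^ b ∂stdComplexGaussian = if a = b then (a.factorial : ℂ) else 0 := by
  split_ifs with hab
  · subst hab
    have hnorm (z : ℂ) : z ^ a * conj z ^ a = ((‖z‖ ^ (2 * a) : ℝ) : ℂ) := by
      rw [← mul_pow, Complex.mul_conj, Complex.normSq_eq_norm_sq, pow_mul]
      push_cast
      rfl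
    have hcomm (z : ℂ) : π⁻¹ * rexp (-‖z‖ ^ 2) * ‖z‖ ^ (2 * a) =
        π⁻¹ * (‖z‖ ^ (2 * a) * rexp (-‖z‖ ^ 2)) := by ring
    simp_rw [hnorm, integral_stdComplexGaussian_eq_integral_smul, Complex.real_smul,
      ← Complex.ofReal_mul, integral_complex_ofReal, hcomm, integral_const_mul,
      Complex.integral_norm_pow_mul_exp_neg_sq, inv_mul_cancel_left₀ pi_ne_zero,
      Complex.ofReal_natCast]
  · exact integral_pow_mul_conj_pow_stdComplexGaussian_of_ne hab

lemma integral_normSq_sum_prod_pow {ι κ : Type*} [Fintype ι] [Fintype κ] (a : κ → ι → ℕ) :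
    ∫ Z, Complex.normSq (∑ k, ∏ p, Z p ^ a k p) ∂(Measure.pi fun _ : ι => stdComplexGaussian) =
      ∑ k, ∑ l, ∏ p, if a k p = a l p then ((a k p).factorial : ℝ) else 0 := by
  have hexpand (Z : ι → ℂ) : (Complex.normSq (∑ k, ∏ p, Z p ^ a k p) : ℂ) =
      ∑ k, ∑ l, ∏ p, Z p ^ a k p * conj (Z p) ^ a l p := by
    simp only [← Complex.mul_conj, map_sum, map_prod, map_pow, Finset.sum_mul_sum,
      Finset.prod_mul_distrib]
  have hint (k l : κ) : Integrable (fun Z : ι → ℂ => ∏ p, Z p ^ a k p * conj (Z p) ^ a l p)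
      (Measure.pi fun _ => stdComplexGaussian) :=
    Integrable.fintype_prod fun p => integrable_pow_mul_conj_pow_stdComplexGaussian _ _
  apply Complex.ofReal_injective
  rw [← integral_complex_ofReal]
  simp_rw [hexpand]
  rw [integral_finsetSum _ fun k _ => integrable_finsetSum _ fun l _ => hint k l]
  push_cast
  refine Finset.sum_congr rfl fun k _ => ?_
  rw [integral_finsetSum _ fun l _ => hint k l]
  refine Finset.sum_congr rfl fun l _ => ?_
  rw [integral_fintype_prod_eq_prod (fun p z => z ^ a k p * conj z ^ a l p)]
  simp_rw [integral_pow_mul_conj_pow_stdComplexGaussian, apply_ite Complex.ofReal,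
    Complex.ofReal_natCast, Complex.ofReal_zero]

def prodBoolArrowEquiv (I α : Type*) [MeasurableSpace α] : (I × Bool → α) ≃ᵐ (I → α × α) :=
  ((MeasurableEquiv.piCongrLeft (fun _ => α)
      (((Equiv.boolProdEquivSum I).trans (Equiv.sumComm I I)).symm.trans
        (Equiv.prodComm Bool I))).symm.trans
    (MeasurableEquiv.sumPiEquivProdPi fun _ => α)).trans
    (MeasurableEquiv.arrowProdEquivProdArrow α α I).symm

lemma measurePreserving_prodBoolArrowEquiv (I : Type*) [Fintype I] {α : Type*}
    [MeasurableSpace α] (μ : Measure α) [SigmaFinite μ] :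
    MeasurePreserving (prodBoolArrowEquiv I α) (Measure.pi fun _ => μ)
      (Measure.pi fun _ => μ.prod μ) :=
  (measurePreserving_arrowProdEquivProdArrow α α I (fun _ => μ) (fun _ => μ)).symm.comp
    ((measurePreserving_sumPiEquivProdPi fun _ => μ).comp
      (measurePreserving_piCongrLeft (fun _ => μ) _).symm)

noncomputable def complexEntriesEquiv (I : Type*) : (I × Bool → ℝ) ≃ᵐ (I → ℂ) :=
  (prodBoolArrowEquiv I ℝ).trans
    (MeasurableEquiv.piCongrRight fun _ => Complex.measurableEquivRealProd.symm)

lemma measurePreserving_complexEntriesEquiv (I : Type*) [Fintype I] :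
    MeasurePreserving (complexEntriesEquiv I) (Measure.pi fun _ => gaussianReal 0 (1 / 2))
      (Measure.pi fun _ => stdComplexGaussian) :=
  (measurePreserving_pi _ _ fun _ => ⟨Complex.measurableEquivRealProd.symm.measurable, rfl⟩).comp
    (measurePreserving_prodBoolArrowEquiv I _)

lemma Nat.card_sigma_fst_eq {ι : Type*} (β : ι → Type*) (i : ι) :
    Nat.card {x : Σ i, β i // x.1 = i} = Nat.card (β i) :=
  Nat.card_congr (Equiv.sigmaSubtype i)

theorem expectation_normSq_perm_repeated (c n : ℕ) (S T : Fin c → ℕ)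
    (hS : ∑ i, S i = n) (hT : ∑ j, T j = n) :
    ∫ ω, Complex.normSq (permRep (gaussianMatrix c ω) S T)
        ∂(Measure.pi fun _ : (Fin c × Fin c) × Bool => gaussianReal 0 (1 / 2)) =
      (n.factorial : ℝ) * (∏ i, ((S i).factorial : ℝ)) * ∏ j, ((T j).factorial : ℝ) := by
  have hperm (A : Matrix (Fin c) (Fin c) ℂ) : permRep A S T =
      ∑ σ, ∏ p, A p.1 p.2 ^ blockCount Sigma.fst Sigma.fst σ p :=
    Finset.sum_congr rfl fun σ _ => prod_eq_prod_pow_blockCount _ _ σ A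
  have hcard : Nat.card ((Σ i, Fin (S i)) ≃ Σ j, Fin (T j)) = n.factorial := by
    have hX : Nat.card (Σ i, Fin (S i)) = n := by simp [hS]
    have hY : Nat.card (Σ j, Fin (T j)) = n := by simp [hT]
    rw [Nat.card_equiv_eq_ite, hX, hY, if_pos rfl]
  have hcount := sum_sum_prod_blockCount (Sigma.fst : (Σ i, Fin (S i)) → Fin c)
    (Sigma.fst : (Σ j, Fin (T j)) → Fin c)
  simp only [hcard, Nat.card_sigma_fst_eq] at hcount
  simp only [Nat.card_eq_fintype_card, Fintype.card_fin] at hcount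
  calc _ = ∫ Z, Complex.normSq (permRep (Matrix.of fun i j => Z (i, j)) S T)
        ∂(Measure.pi fun _ => stdComplexGaussian) :=
      (measurePreserving_complexEntriesEquiv _).integral_comp' fun Z =>
        Complex.normSq (permRep (Matrix.of fun i j => Z (i, j)) S T)
    _ = _ := by
      simp only [hperm, Matrix.of_apply, Prod.mk.eta]
      rw [integral_normSq_sum_prod_pow]
      exact_mod_cast hcount
end

section
/- Summing the counting identity over all block-sum matrices: ∑_{M ∈ M_{S,T}} ∏_{i=1}^c ∏_{j=1}^c (s_i! t_j!)/M_{i,j}! = n!, where M_{S,T} is the set of c×c matrices of non-negative integers with row sums s_1,...,s_c and column sums t_1,...,t_c and ∑ s_i = ∑ t_j = n. (Here the product convention is that for each pair (i,j) the factor s_i! t_j! appears with appropriate multiplicity so that ∏_{i,j} s_i!t_j!/M_{i,j}! = (∏_i s_i!)(∏_j t_j!)/∏_{i,j} M_{i,j}!.) -/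
/-!
Dividing by `∏ i, s_i! * ∏ j, t_j!`, the identity says that the multinomial coefficient of `T` is
the sum over all tables `M` of `∏ i, multinomial (M i)`. Both sides are the coefficient of `x^T` in
`(x_1 + ⋯ + x_c)^n = ∏ i, (x_1 + ⋯ + x_c)^(s_i)`: on the right, expanding the `i`-th factor by the
multinomial theorem chooses the row `M i`, whose entries add up to `s_i`.
-/

open Finset

theorem Nat.cast_multinomial {α K : Type*} [Semifield K] [CharZero K] (s : Finset α)
    (f : α → ℕ) :
    (Nat.multinomial s f : K) = (∑ i ∈ s, f i).factorial / ∏ i ∈ s, ((f i).factorial : K) := by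
  rw [eq_div_iff (prod_ne_zero_iff.mpr fun i _ => Nat.cast_ne_zero.mpr (Nat.factorial_ne_zero _)),
    mul_comm]
  exact_mod_cast Nat.multinomial_spec s f

section ContingencyTables

variable {ι κ : Type*} [Fintype ι] [Fintype κ] [DecidableEq ι] [DecidableEq κ]

def contingencyTables (r : ι → ℕ) (c : κ → ℕ) : Finset (ι → κ → ℕ) :=
  {N ∈ Fintype.piFinset fun i => piAntidiag univ (r i) | ∀ k, ∑ i, N i k = c k}

open MvPolynomial in
theorem sum_contingencyTables_prod_multinomial (r : ι → ℕ) (c : κ → ℕ)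
    (h : ∑ i, r i = ∑ k, c k) :
    ∑ N ∈ contingencyTables r c, ∏ i, Nat.multinomial univ (N i) = Nat.multinomial univ c := by
  have hexpand : (∑ k, X k : MvPolynomial κ ℕ) ^ (∑ i, r i) =
      ∑ N ∈ Fintype.piFinset fun i => piAntidiag univ (r i),
        C (∏ i, Nat.multinomial univ (N i)) * ∏ k, X k ^ ∑ i, N i k := by
    rw [← prod_pow_eq_pow_sum]
    simp_rw [Finset.sum_pow_eq_sum_piAntidiag]
    rw [prod_univ_sum]
    refine sum_congr rfl fun N _ => ?_
    rw [prod_mul_distrib, prod_comm]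
    simp only [prod_pow_eq_pow_sum, map_prod, ← C_eq_coe_nat, Nat.cast_id]
  set d : κ →₀ ℕ := Finsupp.equivFunOnFinite.symm c
  have hdeg : (d.sum fun _ m => m) = ∑ i, r i := by
    rw [h, Finsupp.sum_fintype _ _ fun _ => rfl]
    rfl
  have hcoeff := congrArg (coeff d) hexpand
  simp only [coeff_sum_X_pow_of_fintype, if_pos hdeg, coeff_sum, coeff_C_mul, coeff_prod_X_pow,
    mul_ite, mul_one, mul_zero, ← sum_filter, Finsupp.multinomial_eq_of_support_subset
    (subset_univ d.support), Nat.cast_id] at hcoeff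
  change Nat.multinomial univ c = _ at hcoeff
  rw [hcoeff, contingencyTables]
  refine sum_congr (filter_congr fun N _ => ?_) fun _ _ => rfl
  simp [d, Finsupp.ext_iff, eq_comm]

/-- The decidability instance is a parameter because for `ι = Fin c` instance search finds
`Nat.decidableForallFin` rather than `Fintype.decidableForallFintype`. -/
theorem sum_filter_fin_eq_sum_contingencyTables {β : Type*} [AddCommMonoid β] {n : ℕ}
    (r : ι → ℕ) (c : κ → ℕ) (hr : ∀ i, r i ≤ n) (g : (ι → κ → ℕ) → β)
    [DecidablePred fun M : ι → κ → Fin (n + 1) =>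
      (∀ i, ∑ k, (M i k : ℕ) = r i) ∧ ∀ k, ∑ i, (M i k : ℕ) = c k] :
    ∑ M ∈ univ.filter (fun M : ι → κ → Fin (n + 1) =>
        (∀ i, ∑ k, (M i k : ℕ) = r i) ∧ ∀ k, ∑ i, (M i k : ℕ) = c k),
      g (fun i k => M i k) = ∑ N ∈ contingencyTables r c, g N := by
  have hval : ∀ N ∈ contingencyTables r c, ∀ i k, (Fin.ofNat (n + 1) (N i k) : ℕ) = N i k := by
    intro N hN i k
    simp only [contingencyTables, mem_filter, Fintype.mem_piFinset, mem_piAntidiag] at hN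
    have hle_row := (hN.1 i).1 ▸ single_le_sum (fun k _ => Nat.zero_le (N i k)) (mem_univ k)
    exact Nat.mod_eq_of_lt (by linarith [hr i])
  refine sum_nbij' (fun M i k => M i k) (fun N i k => Fin.ofNat (n + 1) (N i k))
    ?_ ?_ (fun _ _ => by simp) (fun N hN => by simp only [hval N hN]) fun _ _ => rfl
  · intro M hM
    simp_all [contingencyTables]
  · intro N hN
    simp only [mem_filter, mem_univ, true_and, hval N hN]
    simp_all [contingencyTables]

end ContingencyTables

theorem sum_over_blockSum_matrices (c n : ℕ) (S T : Fin c → ℕ)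
    (hS : ∑ i, S i = n) (hT : ∑ j, T j = n) :
    ∑ M ∈ Finset.univ.filter
        (fun M : Fin c → Fin c → Fin (n + 1) =>
          (∀ i, ∑ j, ((M i j : ℕ)) = S i) ∧ (∀ j, ∑ i, ((M i j : ℕ)) = T j)),
      ((∏ i, ((S i).factorial : ℚ)) * ∏ j, ((T j).factorial : ℚ)) /
        ∏ i, ∏ j, (((M i j : ℕ)).factorial : ℚ) =
      (n.factorial : ℚ) := by
  have hsummand : ∀ M ∈ univ.filter (fun M : Fin c → Fin c → Fin (n + 1) =>
      (∀ i, ∑ j, ((M i j : ℕ)) = S i) ∧ (∀ j, ∑ i, ((M i j : ℕ)) = T j)),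
      ((∏ i, ((S i).factorial : ℚ)) * ∏ j, ((T j).factorial : ℚ)) /
        ∏ i, ∏ j, (((M i j : ℕ)).factorial : ℚ) =
      (((∏ j, (T j).factorial) * ∏ i, Nat.multinomial univ (fun j => (M i j : ℕ)) : ℕ) : ℚ) := by
    intro M hM
    simp only [Nat.cast_mul, Nat.cast_prod, Nat.cast_multinomial, (mem_filter.mp hM).2.1,
      prod_div_distrib]
    ring
  have hS_le : ∀ i, S i ≤ n := fun i =>
    hS ▸ single_le_sum (fun i _ => Nat.zero_le (S i)) (mem_univ i)
  have hreindex := sum_filter_fin_eq_sum_contingencyTables S T hS_le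
    fun N => ∏ i, Nat.multinomial univ (N i)
  beta_reduce at hreindex
  rw [sum_congr rfl hsummand, ← Nat.cast_sum, ← mul_sum, hreindex,
    sum_contingencyTables_prod_multinomial S T (hS.trans hT.symm), Nat.multinomial_spec, hT]
end

section
/- Let p_α(σ) = (α/π)√(4 − α^2 σ^2) on [0, 2/α] (the quarter-circle density). Then ∫_0^{2/α} p_α(σ) · σ^2/(1−σ^2) dσ = (1/2)(α^2(1 − √(1 − 4/α^2)) − 2) for α > 2. Consequently, the expected mean photon number is m times this quantity, and as α → ∞ this expression tends to 1/α^2 · (1 + o(1)); more precisely it is bounded above by 2/α^2 for α ≥ 2√2. -/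
/-!
Up to the factor `π⁻¹`, the integrand has the explicit primitive `photonPrimitive α` on
`(-2/α, 2/α)`. At `σ = 2/α` both arcsines equal `π/2` and the square root vanishes, so the integral
is `(α² - 2 - α√(α² - 4))/2 = 4/(α + √(α² - 4))²`. This is at most `2/α²` as soon as
`√(α² - 4) ≥ α/2`, and that holds once `α² ≥ 8`.
-/

open Real intervalIntegral

theorem hasDerivAt_arcsin_mul_div_two {a x : ℝ} (h : a ^ 2 * x ^ 2 < 4) :
    HasDerivAt (fun y => arcsin (a * y / 2)) (a / √(4 - a ^ 2 * x ^ 2)) x := by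
  have hsq : (a * x / 2) ^ 2 < 1 := by nlinarith
  have hlo : a * x / 2 ≠ -1 := fun h' => by rw [h'] at hsq; norm_num at hsq
  have hhi : a * x / 2 ≠ 1 := fun h' => by rw [h'] at hsq; norm_num at hsq
  have hroot : √(1 - (a * x / 2) ^ 2) = √(4 - a ^ 2 * x ^ 2) / 2 := by
    rw [show 1 - (a * x / 2) ^ 2 = (4 - a ^ 2 * x ^ 2) / 2 ^ 2 by ring,
      sqrt_div' _ (by positivity), sqrt_sq (by norm_num)]
  have hpos : 0 < √(4 - a ^ 2 * x ^ 2) := sqrt_pos.mpr (by linarith)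
  refine ((hasDerivAt_arcsin hlo hhi).comp x
    (((hasDerivAt_id x).const_mul a).div_const 2)).congr_deriv ?_
  rw [hroot]
  field_simp

theorem hasDerivAt_arcsin_mul_div_two_sqrt_one_sub_sq {s x : ℝ} (h : (s ^ 2 + 4) * x ^ 2 < 4) :
    HasDerivAt (fun y => arcsin (s * y / (2 * √(1 - y ^ 2))))
      (s / ((1 - x ^ 2) * √(4 - (s ^ 2 + 4) * x ^ 2))) x := by
  have hB : 0 < 1 - x ^ 2 := by nlinarith [sq_nonneg s, sq_nonneg x]
  have hBpos : 0 < √(1 - x ^ 2) := sqrt_pos.mpr hB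
  have hBsq : √(1 - x ^ 2) ^ 2 = 1 - x ^ 2 := sq_sqrt hB.le
  set B := √(1 - x ^ 2)
  set A := √(4 - (s ^ 2 + 4) * x ^ 2)
  have hApos : 0 < A := sqrt_pos.mpr (by linarith)
  have hAsq : A ^ 2 = 4 - (s ^ 2 + 4) * x ^ 2 := sq_sqrt (by linarith)
  have hsq : (s * x / (2 * B)) ^ 2 < 1 := by
    rw [div_pow, div_lt_one (by positivity)]; nlinarith
  have hlo : s * x / (2 * B) ≠ -1 := fun h' => by rw [h'] at hsq; norm_num at hsq
  have hhi : s * x / (2 * B) ≠ 1 := fun h' => by rw [h'] at hsq; norm_num at hsq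
  have hroot : √(1 - (s * x / (2 * B)) ^ 2) = A / (2 * B) := by
    rw [show 1 - (s * x / (2 * B)) ^ 2 = (A / (2 * B)) ^ 2 by
      field_simp; linear_combination 4 * hBsq - hAsq]
    exact sqrt_sq (by positivity)
  have hB' : HasDerivAt (fun y => 2 * √(1 - y ^ 2)) (2 * (-(2 * x) / (2 * B))) x := by
    simpa using (((hasDerivAt_pow 2 x).const_sub 1).sqrt hB.ne').const_mul 2
  refine ((hasDerivAt_arcsin hlo hhi).comp x
    (((hasDerivAt_id x).const_mul s).div hB' (by positivity))).congr_deriv ?_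
  simp only [id, mul_one]
  rw [hroot]
  field_simp
  linear_combination (-s * x ^ 2) * hBsq

theorem hasDerivAt_mul_sqrt_four_sub {a x : ℝ} (h : a ^ 2 * x ^ 2 < 4) :
    HasDerivAt (fun y => y * √(4 - a ^ 2 * y ^ 2))
      ((4 - 2 * a ^ 2 * x ^ 2) / √(4 - a ^ 2 * x ^ 2)) x := by
  have hA : 0 < 4 - a ^ 2 * x ^ 2 := by linarith
  have hApos : 0 < √(4 - a ^ 2 * x ^ 2) := sqrt_pos.mpr hA
  have hAsq : √(4 - a ^ 2 * x ^ 2) ^ 2 = 4 - a ^ 2 * x ^ 2 := sq_sqrt hA.le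
  refine ((hasDerivAt_id x).mul
    (((hasDerivAt_pow 2 x).const_mul (a ^ 2)).const_sub 4 |>.sqrt hA.ne')).congr_deriv ?_
  field_simp
  simp only [id, Nat.cast_ofNat]
  linear_combination 2 * hAsq

noncomputable def photonPrimitive (α x : ℝ) : ℝ :=
  (α ^ 2 - 2) * arcsin (α * x / 2)
    - α * √(α ^ 2 - 4) * arcsin (√(α ^ 2 - 4) * x / (2 * √(1 - x ^ 2)))
    - α / 2 * (x * √(4 - α ^ 2 * x ^ 2))

theorem hasDerivAt_photonPrimitive {α x : ℝ} (hα : 2 ≤ α) (hx : α ^ 2 * x ^ 2 < 4) :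
    HasDerivAt (photonPrimitive α) (α * √(4 - α ^ 2 * x ^ 2) * (x ^ 2 / (1 - x ^ 2))) x := by
  have hS : √(α ^ 2 - 4) ^ 2 + 4 = α ^ 2 := by rw [sq_sqrt (by nlinarith)]; ring
  have hx' : (√(α ^ 2 - 4) ^ 2 + 4) * x ^ 2 < 4 := by rwa [hS]
  have hB : 0 < 1 - x ^ 2 := by nlinarith
  have hA : 0 < 4 - α ^ 2 * x ^ 2 := by linarith
  have hApos : 0 < √(4 - α ^ 2 * x ^ 2) := sqrt_pos.mpr hA
  have hAsq : √(4 - α ^ 2 * x ^ 2) ^ 2 = 4 - α ^ 2 * x ^ 2 := sq_sqrt hA.le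
  have h2 := hasDerivAt_arcsin_mul_div_two_sqrt_one_sub_sq hx'
  rw [hS] at h2
  refine ((((hasDerivAt_arcsin_mul_div_two hx).const_mul (α ^ 2 - 2)).sub
    (h2.const_mul (α * √(α ^ 2 - 4)))).sub
    ((hasDerivAt_mul_sqrt_four_sub hx).const_mul (α / 2))).congr_deriv ?_
  field_simp
  linear_combination (-2) * hS - 2 * x ^ 2 * hAsq

theorem continuousOn_photonPrimitive (α : ℝ) :
    ContinuousOn (photonPrimitive α) (Set.Ioo (-1) 1) := by
  unfold photonPrimitive
  have hB : ∀ x ∈ Set.Ioo (-1 : ℝ) 1, 2 * √(1 - x ^ 2) ≠ 0 := fun x hx => by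
    have : 0 < 1 - x ^ 2 := by nlinarith [hx.1, hx.2]
    positivity
  have := continuous_arcsin
  fun_prop (disch := assumption)

theorem photonPrimitive_zero (α : ℝ) : photonPrimitive α 0 = 0 := by
  simp [photonPrimitive]

theorem photonPrimitive_two_div {α : ℝ} (hα : 2 < α) :
    photonPrimitive α (2 / α) = π / 2 * (α ^ 2 - 2 - α * √(α ^ 2 - 4)) := by
  have hα0 : 0 < α := by linarith
  have hS : 0 < √(α ^ 2 - 4) := sqrt_pos.mpr (by nlinarith)
  have hB : √(1 - (2 / α) ^ 2) = √(α ^ 2 - 4) / α := by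
    rw [show 1 - (2 / α) ^ 2 = (α ^ 2 - 4) / α ^ 2 by field_simp; ring,
      sqrt_div' _ (by positivity), sqrt_sq hα0.le]
  have h1 : α * (2 / α) / 2 = 1 := by field_simp
  have h2 : √(α ^ 2 - 4) * (2 / α) / (2 * √(1 - (2 / α) ^ 2)) = 1 := by
    rw [hB]; field_simp
  have h3 : 4 - α ^ 2 * (2 / α) ^ 2 = 0 := by field_simp; ring
  simp only [photonPrimitive, h1, h2, h3, arcsin_one, sqrt_zero]
  ring

theorem integral_quarterCircle_mul_sq_div_one_sub_sq {α : ℝ} (hα : 2 < α) :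
    (∫ σ in (0 : ℝ)..(2 / α),
        (α / π) * √(4 - α ^ 2 * σ ^ 2) * (σ ^ 2 / (1 - σ ^ 2))) =
      (α ^ 2 - 2 - α * √(α ^ 2 - 4)) / 2 := by
  have hα0 : 0 < α := by linarith
  have hend : 2 / α < 1 := (div_lt_one hα0).mpr hα
  have hIcc : Set.Icc 0 (2 / α) ⊆ Set.Ioo (-1) 1 := fun x hx =>
    ⟨by linarith [hx.1], hx.2.trans_lt hend⟩
  have hderiv : ∀ x ∈ Set.Ioo 0 (2 / α), HasDerivAt (fun y => π⁻¹ * photonPrimitive α y)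
      ((α / π) * √(4 - α ^ 2 * x ^ 2) * (x ^ 2 / (1 - x ^ 2))) x := fun x hx => by
    have hαx : x * α < 2 := (lt_div_iff₀ hα0).mp hx.2
    exact ((hasDerivAt_photonPrimitive hα.le (by nlinarith [mul_pos hα0 hx.1])).const_mul
      π⁻¹).congr_deriv (by ring)
  have hint : IntervalIntegrable (fun σ => (α / π) * √(4 - α ^ 2 * σ ^ 2) * (σ ^ 2 / (1 - σ ^ 2)))
      MeasureTheory.volume 0 (2 / α) := by
    refine ContinuousOn.intervalIntegrable_of_Icc (by positivity) ?_
    refine ContinuousOn.mul (by fun_prop) (ContinuousOn.div (by fun_prop) (by fun_prop) ?_)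
    intro x hx
    have := hIcc hx
    nlinarith [this.1, this.2]
  rw [integral_eq_sub_of_hasDerivAt_of_le (by positivity)
    (continuousOn_const.mul ((continuousOn_photonPrimitive α).mono hIcc)) hderiv hint]
  simp only [Pi.mul_apply, photonPrimitive_two_div hα, photonPrimitive_zero]
  field_simp
  ring

theorem sqrt_one_sub_four_div_sq {α : ℝ} (hα : 0 < α) :
    √(1 - 4 / α ^ 2) = √(α ^ 2 - 4) / α := by
  rw [show 1 - 4 / α ^ 2 = (α ^ 2 - 4) / α ^ 2 by field_simp, sqrt_div' _ (by positivity),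
    sqrt_sq hα.le]

theorem sq_sub_two_sub_mul_sqrt_div_two {α : ℝ} (hα : 2 ≤ α) :
    (α ^ 2 - 2 - α * √(α ^ 2 - 4)) / 2 = 4 / (α + √(α ^ 2 - 4)) ^ 2 := by
  have hS : √(α ^ 2 - 4) ^ 2 = α ^ 2 - 4 := sq_sqrt (by nlinarith)
  have hpos : 0 < α + √(α ^ 2 - 4) := by positivity
  field_simp
  linear_combination (-α * √(α ^ 2 - 4) - α ^ 2 - 2) * hS

theorem four_div_sq_add_sqrt_le {α : ℝ} (hα : 0 < α) (hα8 : 8 ≤ α ^ 2) :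
    4 / (α + √(α ^ 2 - 4)) ^ 2 ≤ 2 / α ^ 2 := by
  have hS : α / 2 ≤ √(α ^ 2 - 4) := le_sqrt_of_sq_le (by nlinarith)
  rw [div_le_div_iff₀ (by positivity) (by positivity)]
  nlinarith

theorem quarterCircle_mean_photon_number (α : ℝ) (hα : 2 < α) :
    (∫ σ in (0 : ℝ)..(2 / α),
        (α / Real.pi) * Real.sqrt (4 - α ^ 2 * σ ^ 2) * (σ ^ 2 / (1 - σ ^ 2))) =
      (1 / 2) * (α ^ 2 * (1 - Real.sqrt (1 - 4 / α ^ 2)) - 2) ∧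
    (2 * Real.sqrt 2 ≤ α →
      (1 / 2) * (α ^ 2 * (1 - Real.sqrt (1 - 4 / α ^ 2)) - 2) ≤ 2 / α ^ 2) := by
  have hα0 : 0 < α := by linarith
  have hvalue : (1 / 2) * (α ^ 2 * (1 - √(1 - 4 / α ^ 2)) - 2) =
      (α ^ 2 - 2 - α * √(α ^ 2 - 4)) / 2 := by
    rw [sqrt_one_sub_four_div_sq hα0]
    field_simp
    ring
  refine ⟨by rw [integral_quarterCircle_mul_sq_div_one_sub_sq hα, hvalue], fun h => ?_⟩
  have h8 : 8 ≤ α ^ 2 := by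
    nlinarith [sq_sqrt (show (0 : ℝ) ≤ 2 by norm_num), sqrt_nonneg 2]
  rw [hvalue, sq_sub_two_sub_mul_sqrt_div_two hα.le]
  exact four_div_sq_add_sqrt_le hα0 h8
end

section
/- Let p_α(σ) = (α/π)√(4 − α^2 σ^2) on [0, 2/α] with α(μ) = (1+μ)/√μ for 0 < μ < 1. Then ∫_0^{2/α} p_α(σ) · (1/(1−σ^2))^2 dσ = (1+μ)/(1−μ) and ∫_0^{2/α} p_α(σ) · (σ/(1−σ^2))^2 dσ = μ(1+μ)/(1−μ). -/
/-! Put `a = 2 / α` and `c = (1 - μ) / (1 + μ)`, so that `a ^ 2 + c ^ 2 = 1` and the density is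
`(α ^ 2 / π) √(a ^ 2 - σ ^ 2)`. Since
`σ ^ 2 / (1 - σ ^ 2) ^ 2 = 1 / (1 - σ ^ 2) ^ 2 - 1 / (1 - σ ^ 2)`, both integrals come down to
`∫₀ᵃ √(a ^ 2 - x ^ 2) / (1 - x ^ 2) = π (1 - c) / 2` and
`∫₀ᵃ √(a ^ 2 - x ^ 2) / (1 - x ^ 2) ^ 2 = π a ^ 2 / (4 c)`.
These follow from the fundamental theorem of calculus with the antiderivatives
`arcsin (x / a) - c G x` and `a ^ 2 / (2 c) G x + x √(a ^ 2 - x ^ 2) / (2 (1 - x ^ 2))`, where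
`G x = arcsin (c x / (a √(1 - x ^ 2)))` has derivative `c / (√(a ^ 2 - x ^ 2) (1 - x ^ 2))`. -/

open Real intervalIntegral Set

lemma hasDerivAt_arcsin_div {a x : ℝ} (ha : 0 < a) (hx : x ^ 2 < a ^ 2) :
    HasDerivAt (fun y => arcsin (y / a)) (1 / √(a ^ 2 - x ^ 2)) x := by
  have hxa : 0 < a ^ 2 - x ^ 2 := by linarith
  obtain ⟨hlo, hhi⟩ := abs_lt_of_sq_lt_sq' (a := x / a)
    (by rwa [div_pow, one_pow, div_lt_one (by positivity)]) zero_le_one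
  refine ((hasDerivAt_arcsin hlo.ne' hhi.ne).comp x
    ((hasDerivAt_id' x).div_const a)).congr_deriv ?_
  have : 1 - (x / a) ^ 2 = (a ^ 2 - x ^ 2) / a ^ 2 := by field_simp
  rw [this, sqrt_div hxa.le, sqrt_sq ha.le]
  field_simp

lemma hasDerivAt_arcsin_mul_div_mul_sqrt_one_sub_sq {a c x : ℝ} (ha : 0 < a) (hc : 0 < c)
    (hac : a ^ 2 + c ^ 2 = 1) (hx : x ^ 2 < a ^ 2) :
    HasDerivAt (fun y => arcsin (c * y / (a * √(1 - y ^ 2))))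
      (c / (√(a ^ 2 - x ^ 2) * (1 - x ^ 2))) x := by
  have h1x : 0 < 1 - x ^ 2 := by nlinarith
  have hxa : 0 < a ^ 2 - x ^ 2 := by linarith
  set s := √(1 - x ^ 2)
  have hs : 0 < s := sqrt_pos.2 h1x
  have hs2 : s ^ 2 = 1 - x ^ 2 := sq_sqrt h1x.le
  have hsqrt : HasDerivAt (fun y => √(1 - y ^ 2)) (-(2 * x) / (2 * s)) x :=
    (by simpa using (hasDerivAt_pow 2 x).const_sub 1 :
      HasDerivAt (fun y => 1 - y ^ 2) (-(2 * x)) x).sqrt h1x.ne'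
  have hquot := ((hasDerivAt_id' x).const_mul c).div (hsqrt.const_mul a) (by positivity)
  -- `(c x) ^ 2 < (a s) ^ 2` reduces to `x ^ 2 < a ^ 2` because `c ^ 2 = 1 - a ^ 2`.
  have hsq : (c * x / (a * s)) ^ 2 < 1 := by
    rw [div_pow, div_lt_one (by positivity), mul_pow, mul_pow, hs2]
    nlinarith
  obtain ⟨hlo, hhi⟩ := abs_lt_of_sq_lt_sq' (a := c * x / (a * s)) (by rwa [one_pow]) zero_le_one
  refine ((hasDerivAt_arcsin hlo.ne' hhi.ne).comp x hquot).congr_deriv ?_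
  have hroot : √(1 - (c * x / (a * s)) ^ 2) = √(a ^ 2 - x ^ 2) / (a * s) := by
    have : 1 - (c * x / (a * s)) ^ 2 = (√(a ^ 2 - x ^ 2) / (a * s)) ^ 2 := by
      rw [div_pow, div_pow, sq_sqrt hxa.le, mul_pow, mul_pow, hs2]
      field_simp
      linear_combination (-x ^ 2) * hac
    rw [this, sqrt_sq (by positivity)]
  rw [hroot]
  field_simp
  linear_combination (-x ^ 2) * hs2

lemma hasDerivAt_mul_sqrt_div_one_sub_sq {a x : ℝ} (ha1 : a ^ 2 < 1) (hx : x ^ 2 < a ^ 2) :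
    HasDerivAt (fun y => y * √(a ^ 2 - y ^ 2) / (1 - y ^ 2))
      ((a ^ 2 + (a ^ 2 - 2) * x ^ 2) / (√(a ^ 2 - x ^ 2) * (1 - x ^ 2) ^ 2)) x := by
  have h1x : 0 < 1 - x ^ 2 := by linarith
  have hxa : 0 < a ^ 2 - x ^ 2 := by linarith
  set s := √(a ^ 2 - x ^ 2)
  have hs : 0 < s := sqrt_pos.2 hxa
  have hs2 : s ^ 2 = a ^ 2 - x ^ 2 := sq_sqrt hxa.le
  have hsqrt : HasDerivAt (fun y => √(a ^ 2 - y ^ 2)) (-(2 * x) / (2 * s)) x :=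
    (by simpa using (hasDerivAt_pow 2 x).const_sub (a ^ 2) :
      HasDerivAt (fun y => a ^ 2 - y ^ 2) (-(2 * x)) x).sqrt hxa.ne'
  have hden : HasDerivAt (fun y => 1 - y ^ 2) (-(2 * x)) x := by
    simpa using (hasDerivAt_pow 2 x).const_sub 1
  have hnum : HasDerivAt (fun y => y * √(a ^ 2 - y ^ 2)) (1 * s + x * (-(2 * x) / (2 * s))) x :=
    (hasDerivAt_id' x).mul hsqrt
  refine (hnum.div hden h1x.ne').congr_deriv ?_
  field_simp
  linear_combination (1 + x ^ 2) * hs2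

lemma continuousOn_arcsin_mul_div_mul_sqrt_one_sub_sq {a : ℝ} (ha : a ≠ 0) (c : ℝ) :
    ContinuousOn (fun y => arcsin (c * y / (a * √(1 - y ^ 2)))) (Ioo (-1) 1) := by
  refine continuous_arcsin.comp_continuousOn (ContinuousOn.div (by fun_prop) (by fun_prop) ?_)
  rintro y ⟨hlo, hhi⟩
  have : 0 < 1 - y ^ 2 := by nlinarith
  positivity

lemma continuousOn_mul_sqrt_div_one_sub_sq (a : ℝ) :
    ContinuousOn (fun y => y * √(a ^ 2 - y ^ 2) / (1 - y ^ 2)) (Ioo (-1) 1) := by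
  refine ContinuousOn.div (by fun_prop) (by fun_prop) ?_
  rintro y ⟨hlo, hhi⟩
  nlinarith

lemma intervalIntegrable_sqrt_sub_sq_div_one_sub_sq_pow {a : ℝ} (ha0 : 0 ≤ a) (ha1 : a < 1)
    (n : ℕ) :
    IntervalIntegrable (fun x => √(a ^ 2 - x ^ 2) / (1 - x ^ 2) ^ n) MeasureTheory.volume 0 a := by
  refine ContinuousOn.intervalIntegrable (ContinuousOn.div (by fun_prop) (by fun_prop) ?_)
  rw [uIcc_of_le ha0]
  rintro y ⟨hlo, hhi⟩
  have : 0 < 1 - y ^ 2 := by nlinarith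
  positivity

lemma arcsin_mul_div_mul_sqrt_one_sub_sq_self {a c : ℝ} (ha : 0 < a) (hc : 0 < c)
    (hac : a ^ 2 + c ^ 2 = 1) : arcsin (c * a / (a * √(1 - a ^ 2))) = π / 2 := by
  rw [show 1 - a ^ 2 = c ^ 2 by linarith, sqrt_sq hc.le, mul_comm a c, div_self (by positivity),
    arcsin_one]

lemma integral_sqrt_sub_sq_div_one_sub_sq {a c : ℝ} (ha : 0 < a) (hc : 0 < c)
    (hac : a ^ 2 + c ^ 2 = 1) :
    ∫ x in (0 : ℝ)..a, √(a ^ 2 - x ^ 2) / (1 - x ^ 2) = π / 2 * (1 - c) := by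
  have ha1 : a < 1 := by nlinarith
  have hIcc : Icc 0 a ⊆ Ioo (-1) 1 := Icc_subset_Ioo (by norm_num) ha1
  have hG := (continuousOn_arcsin_mul_div_mul_sqrt_one_sub_sq ha.ne' c).mono hIcc
  rw [integral_eq_sub_of_hasDerivAt_of_le (f := fun y =>
      arcsin (y / a) - c * arcsin (c * y / (a * √(1 - y ^ 2)))) ha.le ?cont ?deriv
      (by simpa using intervalIntegrable_sqrt_sub_sq_div_one_sub_sq_pow ha.le ha1 1)]
  case cont =>
    exact (continuous_arcsin.comp (by fun_prop)).continuousOn.sub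
      (continuousOn_const.mul hG)
  case deriv =>
    rintro x ⟨hx0, hxa⟩
    have hx : x ^ 2 < a ^ 2 := by nlinarith
    refine ((hasDerivAt_arcsin_div ha hx).sub
      ((hasDerivAt_arcsin_mul_div_mul_sqrt_one_sub_sq ha hc hac hx).const_mul c)).congr_deriv ?_
    have hxa' : 0 < a ^ 2 - x ^ 2 := by linarith
    have h1x : 0 < 1 - x ^ 2 := by nlinarith
    have hs : 0 < √(a ^ 2 - x ^ 2) := sqrt_pos.2 hxa'
    field_simp
    linear_combination (-1 : ℝ) * hac - sq_sqrt hxa'.le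
  simp only [div_self ha.ne', arcsin_one, arcsin_mul_div_mul_sqrt_one_sub_sq_self ha hc hac]
  simp
  ring

lemma integral_sqrt_sub_sq_div_one_sub_sq_sq {a c : ℝ} (ha : 0 < a) (hc : 0 < c)
    (hac : a ^ 2 + c ^ 2 = 1) :
    ∫ x in (0 : ℝ)..a, √(a ^ 2 - x ^ 2) / (1 - x ^ 2) ^ 2 = π * a ^ 2 / (4 * c) := by
  have ha1 : a < 1 := by nlinarith
  have hIcc : Icc 0 a ⊆ Ioo (-1) 1 := Icc_subset_Ioo (by norm_num) ha1
  have hG := (continuousOn_arcsin_mul_div_mul_sqrt_one_sub_sq ha.ne' c).mono hIcc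
  rw [integral_eq_sub_of_hasDerivAt_of_le (f := fun y =>
      a ^ 2 / (2 * c) * arcsin (c * y / (a * √(1 - y ^ 2))) +
        y * √(a ^ 2 - y ^ 2) / (1 - y ^ 2) / 2)
      ha.le ?cont ?deriv (intervalIntegrable_sqrt_sub_sq_div_one_sub_sq_pow ha.le ha1 2)]
  case cont =>
    exact (continuousOn_const.mul hG).add
      (((continuousOn_mul_sqrt_div_one_sub_sq a).mono hIcc).div_const 2)
  case deriv =>
    rintro x ⟨hx0, hxa⟩
    have hx : x ^ 2 < a ^ 2 := by nlinarith
    refine (((hasDerivAt_arcsin_mul_div_mul_sqrt_one_sub_sq ha hc hac hx).const_mul _).add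
      ((hasDerivAt_mul_sqrt_div_one_sub_sq (by nlinarith) hx).div_const 2)).congr_deriv ?_
    have hxa' : 0 < a ^ 2 - x ^ 2 := by linarith
    have h1x : 0 < 1 - x ^ 2 := by nlinarith
    have hs : 0 < √(a ^ 2 - x ^ 2) := sqrt_pos.2 hxa'
    field_simp
    linear_combination (-2 : ℝ) * sq_sqrt hxa'.le
  simp only [arcsin_mul_div_mul_sqrt_one_sub_sq_self ha hc hac]
  simp
  field_simp
  ring

lemma integral_sqrt_sub_sq_mul_sq_div_one_sub_sq_sq {a c : ℝ} (ha : 0 < a) (hc : 0 < c)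
    (hac : a ^ 2 + c ^ 2 = 1) :
    ∫ x in (0 : ℝ)..a, √(a ^ 2 - x ^ 2) * x ^ 2 / (1 - x ^ 2) ^ 2 =
      π * a ^ 2 / (4 * c) - π / 2 * (1 - c) := by
  have ha1 : a < 1 := by nlinarith
  have hsplit : EqOn (fun x => √(a ^ 2 - x ^ 2) * x ^ 2 / (1 - x ^ 2) ^ 2)
      (fun x => √(a ^ 2 - x ^ 2) / (1 - x ^ 2) ^ 2 - √(a ^ 2 - x ^ 2) / (1 - x ^ 2))
      (uIcc 0 a) := by
    intro x hx
    rw [uIcc_of_le ha.le] at hx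
    have : 1 - x ^ 2 ≠ 0 := by nlinarith [hx.1, hx.2]
    field_simp
    ring
  rw [integral_congr hsplit,
    integral_sub (intervalIntegrable_sqrt_sub_sq_div_one_sub_sq_pow ha.le ha1 2)
      (by simpa using intervalIntegrable_sqrt_sub_sq_div_one_sub_sq_pow ha.le ha1 1),
    integral_sqrt_sub_sq_div_one_sub_sq_sq ha hc hac, integral_sqrt_sub_sq_div_one_sub_sq ha hc hac]

lemma integral_quarterCircle_mul {α : ℝ} (hα : 0 < α) (f : ℝ → ℝ) :
    ∫ σ in (0 : ℝ)..2 / α, α / π * √(4 - α ^ 2 * σ ^ 2) * f σ =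
      α ^ 2 / π * ∫ σ in (0 : ℝ)..2 / α, √((2 / α) ^ 2 - σ ^ 2) * f σ := by
  rw [← integral_const_mul]
  congr 1
  ext σ
  rw [show 4 - α ^ 2 * σ ^ 2 = α ^ 2 * ((2 / α) ^ 2 - σ ^ 2) by field_simp; ring,
    sqrt_mul (sq_nonneg α), sqrt_sq hα.le]
  ring

theorem quarterCircle_frobenius_norms (μ α : ℝ) (hμ0 : 0 < μ) (hμ1 : μ < 1)
    (hα : α = (1 + μ) / Real.sqrt μ) :
    (∫ σ in (0 : ℝ)..(2 / α),
        (α / Real.pi) * Real.sqrt (4 - α ^ 2 * σ ^ 2) * (1 / (1 - σ ^ 2)) ^ 2) =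
      (1 + μ) / (1 - μ) ∧
    (∫ σ in (0 : ℝ)..(2 / α),
        (α / Real.pi) * Real.sqrt (4 - α ^ 2 * σ ^ 2) * (σ / (1 - σ ^ 2)) ^ 2) =
      μ * (1 + μ) / (1 - μ) := by
  obtain ⟨s, hs, rfl⟩ : ∃ s, 0 < s ∧ μ = s ^ 2 := ⟨√μ, sqrt_pos.2 hμ0, (sq_sqrt hμ0.le).symm⟩
  rw [sqrt_sq hs.le] at hα
  have hα0 : 0 < α := hα ▸ by positivity
  have hc : 0 < (1 - s ^ 2) / (1 + s ^ 2) := div_pos (by linarith) (by positivity)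
  have hac : (2 / α) ^ 2 + ((1 - s ^ 2) / (1 + s ^ 2)) ^ 2 = 1 := by
    rw [hα]; field_simp; ring
  rw [integral_quarterCircle_mul hα0, integral_quarterCircle_mul hα0]
  have h1s : 1 - s ^ 2 ≠ 0 := by linarith
  -- `set` protects `(2 / α) ^ 2` from `div_pow`
  set a := 2 / α with ha
  simp only [div_pow, one_pow, mul_div_assoc', mul_one]
  rw [integral_sqrt_sub_sq_div_one_sub_sq_sq (by positivity) hc hac,
    integral_sqrt_sub_sq_mul_sq_div_one_sub_sq_sq (by positivity) hc hac, ha, hα]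
  constructor <;> field_simp <;> ring
end
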